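/- arXiv:1509.01568 — 4 statements merged into one kernel-verified Lean document; each statement's English description precedes it below -/
import Mathlib

section
/- For any group G the following three statements are equivalent: (1) there exist a partition {A_1,…,A_p, B_1,…,B_q} of G and elements s_1,…,s_p, t_1,…,t_q ∈ G such that {s_iA_i}_{i=1}^p and {t_jB_j}_{j=1}^q each form a partition of G; (2) there exist pairwise disjoint subsets A_1,…,A_p, B_1,…,B_q of G and elements s_1,…,s_p, t_1,…,t_q ∈ G such that {s_iA_i}_{i=1}^p and {t_jB_j}_{j=1}^q each form a partition of G; (3) there exist pairwise disjoint subsets A_1,…,A_p, B_1,…,B_q of G and elements s_1,…,s_p, t_1,…,t_q ∈ G such that G = ⋃_{i=1}^p s_iA_i = ⋃_{j=1}^q t_jB_j (the unions not necessarily disjoint). -/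
open Pointwise Function Set

/-!
(3) ⇒ (2): keep from each translate `s i • A i` only the points not covered by an earlier one
(`disjointed`) and pull it back by `s i`.

(2) ⇒ (1) is the Banach–Schröder–Bernstein argument. The translations `a ↦ s i • a` on `A i`
glue to a bijection `φ : ⋃ i, A i → G`. Let `Z` be the least set containing `U = ⋃ j, B j` and
closed under `φ⁻¹`, so that `Z = U ∪ φ⁻¹ Z`. Then the pieces `φ⁻¹ Z ∩ A i` together with `Zᶜ`
partition `G \ U`, and their translates by `s i` and by `1` partition `Z` and `Zᶜ`.
-/

section Snoc

variable {α : Type*} {n : ℕ}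

theorem Fin.pairwise_disjoint_snoc [PartialOrder α] [OrderBot α] {C : Fin n → α} {D : α}
    (hC : Pairwise (Disjoint on C)) (hCD : ∀ i, Disjoint (C i) D) :
    Pairwise (Disjoint on Fin.snoc (α := fun _ ↦ α) C D) := by
  intro i j hij
  induction i using Fin.lastCases with
  | last =>
    induction j using Fin.lastCases with
    | last => exact absurd rfl hij
    | cast j => simpa [onFun] using (hCD j).symm
  | cast i =>
    induction j using Fin.lastCases with
    | last => simpa [onFun] using hCD i
    | cast j => simpa [onFun] using hC (ne_of_apply_ne Fin.castSucc hij)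

theorem Fin.snoc_smul_snoc {M : Type*} [SMul M α] (s : Fin n → M) (g : M) (C : Fin n → α)
    (D : α) (i : Fin (n + 1)) :
    Fin.snoc (α := fun _ ↦ M) s g i • Fin.snoc (α := fun _ ↦ α) C D i =
      Fin.snoc (α := fun _ ↦ α) (fun i ↦ s i • C i) (g • D) i := by
  induction i using Fin.lastCases <;> simp

end Snoc

section Translates

variable {G α : Type*} [Group G] [MulAction G α]

theorem exists_subset_pairwise_disjoint_smul {ι : Type*} [LinearOrder ι]
    [LocallyFiniteOrderBot ι] (A : ι → Set α) (s : ι → G) :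
    ∃ A' : ι → Set α, (∀ i, A' i ⊆ A i) ∧ (⋃ i, s i • A' i) = ⋃ i, s i • A i ∧
      Pairwise (Disjoint on fun i ↦ s i • A' i) := by
  have hsA' : ∀ i, s i • (s i)⁻¹ • disjointed (fun i ↦ s i • A i) i =
      disjointed (fun i ↦ s i • A i) i := fun i ↦ smul_inv_smul _ _
  refine ⟨fun i ↦ (s i)⁻¹ • disjointed (fun i ↦ s i • A i) i, fun i ↦ ?_, ?_, ?_⟩
  · rw [← inv_smul_smul (s i) (A i)]
    exact smul_set_mono (disjointed_subset _ i)
  · simp only [hsA', iUnion_disjointed]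
  · simpa only [hsA'] using disjoint_disjointed _

theorem exists_partition_compl_with_smul_partition {p : ℕ} {A : Fin p → Set α}
    {s : Fin p → G} {U : Set α} (hA : Pairwise (Disjoint on A)) (hAU : ∀ i, Disjoint (A i) U)
    (hsA : (⋃ i, s i • A i) = univ) (hsA_disj : Pairwise (Disjoint on fun i ↦ s i • A i)) :
    ∃ (A' : Fin (p + 1) → Set α) (s' : Fin (p + 1) → G),
      Pairwise (Disjoint on A') ∧ (∀ i, Disjoint (A' i) U) ∧ (⋃ i, A' i) ∪ U = univ ∧
      (⋃ i, s' i • A' i) = univ ∧ Pairwise (Disjoint on fun i ↦ s' i • A' i) := by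
  let F : Set α →o Set α :=
    { toFun := fun S ↦ U ∪ ⋃ i, (s i)⁻¹ • (S ∩ s i • A i)
      monotone' := fun _ _ h ↦ union_subset_union_right _ <|
        iUnion_mono fun _ ↦ smul_set_mono <| inter_subset_inter_left _ h }
  set Z := F.lfp
  set C : Fin p → Set α := fun i ↦ (s i)⁻¹ • (Z ∩ s i • A i)
  have hZ : U ∪ ⋃ i, C i = Z := F.map_lfp
  have hUZ : U ⊆ Z := hZ ▸ subset_union_left
  have hCZ : ∀ i, C i ⊆ Z := fun i ↦ hZ ▸ (subset_iUnion C i).trans subset_union_right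
  have hCA : ∀ i, C i ⊆ A i := fun i ↦ by
    rw [← inv_smul_smul (s i) (A i)]
    exact smul_set_mono inter_subset_right
  have hsC : ∀ i, s i • C i = Z ∩ s i • A i := fun i ↦ smul_inv_smul _ _
  have hs'C : (fun i ↦ Fin.snoc (α := fun _ ↦ G) s 1 i • Fin.snoc (α := fun _ ↦ Set α) C Zᶜ i) =
      Fin.snoc (α := fun _ ↦ Set α) (fun i ↦ Z ∩ s i • A i) Zᶜ := by
    ext1 i
    simp only [Fin.snoc_smul_snoc, hsC, one_smul]
  refine ⟨Fin.snoc C Zᶜ, Fin.snoc s 1, ?_, fun i ↦ ?_, ?_, ?_, ?_⟩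
  · exact Fin.pairwise_disjoint_snoc (fun i j hij ↦ (hA hij).mono (hCA i) (hCA j))
      fun i ↦ disjoint_compl_right_iff_subset.mpr (hCZ i)
  · induction i using Fin.lastCases with
    | last => simpa using disjoint_compl_left_iff_subset.mpr hUZ
    | cast i => simpa using (hAU i).mono_left (hCA i)
  · rw [iUnion_snoc, union_right_comm, union_comm (⋃ i, C i), hZ, union_compl_self]
  · rw [hs'C, iUnion_snoc, ← inter_iUnion, hsA, inter_univ, union_compl_self]
  · rw [hs'C]
    exact Fin.pairwise_disjoint_snoc (fun i j hij ↦ (hsA_disj hij).mono inter_subset_right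
      inter_subset_right) fun i ↦ disjoint_compl_right_iff_subset.mpr inter_subset_left

end Translates

/-- Equivalence of the three forms of paradoxical decomposition of a group `G`:
(1) the pieces form a partition of `G` and both families of translates are partitions of `G`;
(2) the pieces are merely pairwise disjoint and both families of translates are partitions;
(3) the pieces are pairwise disjoint and both families of translates merely cover `G`. -/
theorem paradox_equiv (G : Type*) [Group G] :
    ((∃ (p q : ℕ) (A : Fin p → Set G) (B : Fin q → Set G) (s : Fin p → G) (t : Fin q → G),
        (∀ i i', i ≠ i' → Disjoint (A i) (A i')) ∧
        (∀ j j', j ≠ j' → Disjoint (B j) (B j')) ∧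
        (∀ i j, Disjoint (A i) (B j)) ∧
        ((⋃ i, A i) ∪ (⋃ j, B j)) = Set.univ ∧
        (⋃ i, s i • A i) = Set.univ ∧
        (∀ i i', i ≠ i' → Disjoint (s i • A i) (s i' • A i')) ∧
        (⋃ j, t j • B j) = Set.univ ∧
        (∀ j j', j ≠ j' → Disjoint (t j • B j) (t j' • B j'))) ↔
      (∃ (p q : ℕ) (A : Fin p → Set G) (B : Fin q → Set G) (s : Fin p → G) (t : Fin q → G),
        (∀ i i', i ≠ i' → Disjoint (A i) (A i')) ∧
        (∀ j j', j ≠ j' → Disjoint (B j) (B j')) ∧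
        (∀ i j, Disjoint (A i) (B j)) ∧
        (⋃ i, s i • A i) = Set.univ ∧
        (∀ i i', i ≠ i' → Disjoint (s i • A i) (s i' • A i')) ∧
        (⋃ j, t j • B j) = Set.univ ∧
        (∀ j j', j ≠ j' → Disjoint (t j • B j) (t j' • B j')))) ∧
    ((∃ (p q : ℕ) (A : Fin p → Set G) (B : Fin q → Set G) (s : Fin p → G) (t : Fin q → G),
        (∀ i i', i ≠ i' → Disjoint (A i) (A i')) ∧
        (∀ j j', j ≠ j' → Disjoint (B j) (B j')) ∧
        (∀ i j, Disjoint (A i) (B j)) ∧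
        (⋃ i, s i • A i) = Set.univ ∧
        (∀ i i', i ≠ i' → Disjoint (s i • A i) (s i' • A i')) ∧
        (⋃ j, t j • B j) = Set.univ ∧
        (∀ j j', j ≠ j' → Disjoint (t j • B j) (t j' • B j'))) ↔
      (∃ (p q : ℕ) (A : Fin p → Set G) (B : Fin q → Set G) (s : Fin p → G) (t : Fin q → G),
        (∀ i i', i ≠ i' → Disjoint (A i) (A i')) ∧
        (∀ j j', j ≠ j' → Disjoint (B j) (B j')) ∧
        (∀ i j, Disjoint (A i) (B j)) ∧
        (⋃ i, s i • A i) = Set.univ ∧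
        (⋃ j, t j • B j) = Set.univ)) := by

  refine ⟨⟨?_, ?_⟩, ⟨?_, ?_⟩⟩
  · rintro ⟨p, q, A, B, s, t, hA, hB, hAB, -, hsU, hsD, htU, htD⟩
    exact ⟨p, q, A, B, s, t, hA, hB, hAB, hsU, hsD, htU, htD⟩
  · rintro ⟨p, q, A, B, s, t, hA, hB, hAB, hsU, hsD, htU, htD⟩
    obtain ⟨A', s', hA', hA'B, hcov, hs'U, hs'D⟩ := exists_partition_compl_with_smul_partition
      (U := ⋃ j, B j) hA (fun i ↦ disjoint_iUnion_right.mpr (hAB i)) hsU hsD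
    exact ⟨p + 1, q, A', B, s', t, fun _ _ h ↦ hA' h, hB, fun i j ↦
      (hA'B i).mono_right (subset_iUnion B j), hcov, hs'U, fun _ _ h ↦ hs'D h, htU, htD⟩
  · rintro ⟨p, q, A, B, s, t, hA, hB, hAB, hsU, -, htU, -⟩
    exact ⟨p, q, A, B, s, t, hA, hB, hAB, hsU, htU⟩
  · rintro ⟨p, q, A, B, s, t, hA, hB, hAB, hsU, htU⟩
    obtain ⟨A', hA'A, hs'U, hs'D⟩ := exists_subset_pairwise_disjoint_smul A s
    obtain ⟨B', hB'B, ht'U, ht'D⟩ := exists_subset_pairwise_disjoint_smul B t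
    exact ⟨p, q, A', B', s, t, fun i i' h ↦ (hA i i' h).mono (hA'A i) (hA'A i'),
      fun j j' h ↦ (hB j j' h).mono (hB'B j) (hB'B j'), fun i j ↦ (hAB i j).mono (hA'A i) (hB'B j),
      hs'U.trans hsU, fun _ _ h ↦ hs'D h, ht'U.trans htU, fun _ _ h ↦ ht'D h⟩
end

section
/- Let G be a group, 𝔤 = (g_1,…,g_n) a finite string of elements of G, ℰ = {E_1,…,E_m} a finite partition of G, and set g_0 = e. Then for every i ∈ {1,…,m} and every k ∈ {0,1,…,n}, the union ⋃_{C ∈ Con(𝔤,ℰ) : x_k(C) ⊆ E_i} x_0(C) equals g_k^{-1}E_i and is a disjoint union. Consequently, for all j, k ∈ {0,1,…,n}, (g_j^{-1}g_k)·(⋃_{C : x_k(C) ⊆ E_i} x_0(C)) = ⋃_{C : x_j(C) ⊆ E_i} x_0(C). -/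
open Pointwise

namespace PaperStmt

/-- `E : Fin m → Set G` is a partition of `G`: pairwise disjoint with union all of `G`. -/
def IsPartition {G : Type*} {m : ℕ} (E : Fin m → Set G) : Prop :=
  (∀ i j, i ≠ j → Disjoint (E i) (E j)) ∧ (⋃ i, E i) = Set.univ

/-- `C = (c_0, …, c_n)` is a configuration for the pair `(g, E)`: there is `x ∈ E (c 0)`
with `g i * x ∈ E (c i)` for `1 ≤ i ≤ n`. -/
def IsConfig {G : Type*} [Group G] {n m : ℕ} (g : Fin n → G) (E : Fin m → Set G)
    (C : Fin (n + 1) → Fin m) : Prop :=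
  ∃ x : G, x ∈ E (C 0) ∧ ∀ i : Fin n, g i * x ∈ E (C i.succ)

/-- `x_0(C) = E_{c_0} ∩ ⋂_{j=1}^n g_j⁻¹ E_{c_j}`. -/
def xzero {G : Type*} [Group G] {n m : ℕ} (g : Fin n → G) (E : Fin m → Set G)
    (C : Fin (n + 1) → Fin m) : Set G :=
  E (C 0) ∩ ⋂ i : Fin n, (g i)⁻¹ • E (C i.succ)

/-- The string `(g_0, g_1, …, g_n)` with `g_0 = e`. -/
def ghat {G : Type*} [Group G] {n : ℕ} (g : Fin n → G) : Fin (n + 1) → G := Fin.cons 1 g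

/-- `x_j(C) = g_j • x_0(C)` for `0 ≤ j ≤ n` (with `g_0 = e`). -/
def xj {G : Type*} [Group G] {n m : ℕ} (g : Fin n → G) (E : Fin m → Set G)
    (C : Fin (n + 1) → Fin m) (j : Fin (n + 1)) : Set G :=
  ghat g j • xzero g E C

/-- The real-valued indicator of a proposition. -/
noncomputable def ind (P : Prop) : ℝ :=
  letI := Classical.propDecidable P; if P then 1 else 0

/-- `f` is a solution of the system of configuration equations `Eq(g, E)`:
for all `1 ≤ i ≤ m` and `0 ≤ j, k ≤ n`,
`∑_{C : x_j(C) ⊆ E_i} f C = ∑_{C : x_k(C) ⊆ E_i} f C`. -/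
def IsEqSolution {G : Type*} [Group G] {n m : ℕ} (g : Fin n → G) (E : Fin m → Set G)
    (f : {C : Fin (n + 1) → Fin m // IsConfig g E C} → ℝ) : Prop :=
  ∀ (i : Fin m) (j k : Fin (n + 1)),
    ∑ᶠ C ∈ {C : {C : Fin (n + 1) → Fin m // IsConfig g E C} | xj g E C.1 j ⊆ E i}, f C =
    ∑ᶠ C ∈ {C : {C : Fin (n + 1) → Fin m // IsConfig g E C} | xj g E C.1 k ⊆ E i}, f C

end PaperStmt

/-!
A point `x` lies in `x_0(C)` exactly when `C` is its itinerary `k ↦ (the cell of ℰ containing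
g_k x)`. Since `ℰ` is a partition, every point has exactly one itinerary, so the nonempty sets
`x_0(C)` partition `G`, and those with `c_k = i`, i.e. with `x_k(C) ⊆ E_i`, cover `g_k⁻¹ E_i`.
-/

namespace PaperStmt

section

variable {G : Type*} {n m : ℕ} {E : Fin m → Set G}

theorem IsPartition.eq_of_mem (hE : IsPartition E) {x : G} {i j : Fin m} (hi : x ∈ E i)
    (hj : x ∈ E j) : i = j := by
  by_contra hne
  exact (hE.1 i j hne).ne_of_mem hi hj rfl

theorem IsPartition.exists_mem (hE : IsPartition E) (x : G) : ∃ i, x ∈ E i :=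
  Set.mem_iUnion.1 (hE.2 ▸ Set.mem_univ x)

variable [Group G] {g : Fin n → G}

theorem mem_xzero_iff {C : Fin (n + 1) → Fin m} {x : G} :
    x ∈ xzero g E C ↔ ∀ k, ghat g k * x ∈ E (C k) := by
  simp [xzero, ghat, Fin.forall_fin_succ, Set.mem_inv_smul_set_iff]

theorem isConfig_iff_nonempty_xzero {C : Fin (n + 1) → Fin m} :
    IsConfig g E C ↔ (xzero g E C).Nonempty := by
  simp [IsConfig, Set.Nonempty, mem_xzero_iff, ghat, Fin.forall_fin_succ]

theorem xj_subset {C : Fin (n + 1) → Fin m} (k : Fin (n + 1)) : xj g E C k ⊆ E (C k) := by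
  rintro _ ⟨x, hx, rfl⟩
  exact mem_xzero_iff.1 hx k

theorem xj_subset_iff (hE : IsPartition E) {C : Fin (n + 1) → Fin m} (hC : IsConfig g E C)
    {i : Fin m} {k : Fin (n + 1)} : xj g E C k ⊆ E i ↔ C k = i := by
  refine ⟨fun hsub => ?_, fun hk => hk ▸ xj_subset k⟩
  obtain ⟨x, hx⟩ := isConfig_iff_nonempty_xzero.1 hC
  have hxk : ghat g k • x ∈ xj g E C k := Set.smul_mem_smul_set hx
  exact hE.eq_of_mem (xj_subset k hxk) (hsub hxk)

theorem exists_mem_xzero (hE : IsPartition E) (x : G) : ∃ C, x ∈ xzero g E C := by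
  choose C hC using fun k => hE.exists_mem (ghat g k * x)
  exact ⟨C, mem_xzero_iff.2 hC⟩

theorem disjoint_xzero (hE : IsPartition E) {C C' : Fin (n + 1) → Fin m} (hne : C ≠ C') :
    Disjoint (xzero g E C) (xzero g E C') := by
  refine Set.disjoint_left.2 fun x hx hx' => hne (funext fun k => ?_)
  exact hE.eq_of_mem (mem_xzero_iff.1 hx k) (mem_xzero_iff.1 hx' k)

theorem biUnion_xzero_eq_inv_smul (hE : IsPartition E) (i : Fin m) (k : Fin (n + 1)) :
    (⋃ C ∈ {C : Fin (n + 1) → Fin m | IsConfig g E C ∧ xj g E C k ⊆ E i}, xzero g E C) =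
      (ghat g k)⁻¹ • E i := by
  ext x
  simp only [Set.mem_iUnion, Set.mem_ofPred_eq, exists_prop, Set.mem_inv_smul_set_iff,
    smul_eq_mul]
  constructor
  · rintro ⟨C, ⟨hC, hk⟩, hx⟩
    exact (xj_subset_iff hE hC).1 hk ▸ mem_xzero_iff.1 hx k
  · intro hx
    obtain ⟨C, hxC⟩ := exists_mem_xzero hE x
    have hC : IsConfig g E C := isConfig_iff_nonempty_xzero.2 ⟨x, hxC⟩
    have hk : C k = i := hE.eq_of_mem (mem_xzero_iff.1 hxC k) hx
    exact ⟨C, ⟨hC, (xj_subset_iff hE hC).2 hk⟩, hxC⟩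

end

/-- For every `i ∈ {1, …, m}` and `k ∈ {0, 1, …, n}`, the union
`⋃_{C : x_k(C) ⊆ E_i} x_0(C)` equals `g_k⁻¹ • E_i` and is a disjoint union; consequently,
for all `j, k`, `(g_j⁻¹ g_k) • (⋃_{C : x_k(C) ⊆ E_i} x_0(C)) = ⋃_{C : x_j(C) ⊆ E_i} x_0(C)`. -/
theorem union_xzero_eq {G : Type*} [Group G] {n m : ℕ} (g : Fin n → G) (E : Fin m → Set G)
    (hE : IsPartition E) :
    ∀ (i : Fin m) (k : Fin (n + 1)),
      (⋃ C ∈ {C : Fin (n + 1) → Fin m | IsConfig g E C ∧ xj g E C k ⊆ E i}, xzero g E C) =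
        (ghat g k)⁻¹ • E i ∧
      (∀ C C' : Fin (n + 1) → Fin m,
        (IsConfig g E C ∧ xj g E C k ⊆ E i) → (IsConfig g E C' ∧ xj g E C' k ⊆ E i) →
        C ≠ C' → Disjoint (xzero g E C) (xzero g E C')) ∧
      (∀ j : Fin (n + 1),
        ((ghat g j)⁻¹ * ghat g k) •
            (⋃ C ∈ {C : Fin (n + 1) → Fin m | IsConfig g E C ∧ xj g E C k ⊆ E i},
              xzero g E C) =
          ⋃ C ∈ {C : Fin (n + 1) → Fin m | IsConfig g E C ∧ xj g E C j ⊆ E i},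
            xzero g E C) := by
  intro i k
  refine ⟨biUnion_xzero_eq_inv_smul hE i k,
    fun C C' _ _ hne => disjoint_xzero hE hne, fun j => ?_⟩
  rw [biUnion_xzero_eq_inv_smul hE i k, biUnion_xzero_eq_inv_smul hE i j, smul_smul,
    mul_inv_cancel_right]

end PaperStmt
end

section
/- Let V and W be n×ℓ (0,1)-matrices and let V⁺ denote V with its rows cyclically shifted up by one (row i of V⁺ equals row i+1 of V for 1 ≤ i ≤ n−1, and row n of V⁺ equals row 1 of V). Suppose every entry of the matrix T(W−V) − V⁺ is ≥ −1, where T is the n×n lower-triangular matrix with all entries on and below the diagonal equal to 1. For 1 ≤ i ≤ n put A_i = {s ∈ {1,…,ℓ} : V_{i,s} = 1} and B_i = {s ∈ {1,…,ℓ} : W_{i,s} = 1}. Then for every m with 1 ≤ m ≤ n one has ⋃_{k=1}^{m−1} (A_k ∩ A_m) ⊆ ⋃_{i=1}^{m−1} B_i. -/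
namespace PaperStmt

/-- A (0,1)-matrix: every entry is 0 or 1. -/
def ZeroOneMat {α β : Type*} (M : Matrix α β ℝ) : Prop := ∀ i j, M i j = 0 ∨ M i j = 1

/-- The lower-triangular matrix `T` with all entries on and below the diagonal equal to 1. -/
def Tmat (n : ℕ) : Matrix (Fin n) (Fin n) ℝ := fun i j => if j ≤ i then 1 else 0

/-- The permutation matrix associated to a permutation `σ` (row `i` is `e_{σ i}`). -/
def permMat {n : ℕ} (σ : Equiv.Perm (Fin n)) : Matrix (Fin n) (Fin n) ℝ :=
  fun i j => if σ i = j then 1 else 0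

/-- Cyclic successor on `Fin n`. -/
def cycSucc {n : ℕ} (i : Fin n) : Fin n := ⟨(i.val + 1) % n, Nat.mod_lt _ i.pos⟩

/-- `M⁺`: the matrix `M` with its rows cyclically shifted up by one. -/
def shiftRows {n : ℕ} {ι : Type*} (M : Matrix (Fin n) ι ℝ) : Matrix (Fin n) ι ℝ :=
  fun i j => M (cycSucc i) j

/-- The system `(B - A) X = 0` is *normal* if there is a permutation matrix `P` such that
every entry of `T P (B - A) - P⁺ A` is an integer `≥ -1`. -/
def IsNormal {n : ℕ} {ι : Type*} (A B : Matrix (Fin n) ι ℝ) : Prop :=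
  ∃ σ : Equiv.Perm (Fin n), ∀ (i : Fin n) (j : ι),
    ∃ z : ℤ,
      (Tmat n * (permMat σ * (B - A)) - shiftRows (permMat σ) * A) i j = (z : ℝ) ∧ -1 ≤ z

end PaperStmt

/-!
Take `s ∈ A_k ∩ A_m` with `k < m` and suppose `W_{i,s} = 0` for all `i < m`. The entry of
`T (W - V) - V⁺` in row `m - 1` (whose cyclic successor is `m`) and column `s` is
`-∑_{j < m} V_{j,s} - V_{m,s} ≤ -V_{k,s} - 1 = -2`, contradicting the hypothesis.
-/

namespace PaperStmt

open Finset

lemma Tmat_mul_apply {n : ℕ} {ι : Type*} (M : Matrix (Fin n) ι ℝ) (i : Fin n) (j : ι) :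
    (Tmat n * M) i j = ∑ k ∈ Iic i, M k j := by
  simp only [Matrix.mul_apply, Tmat, ite_mul, one_mul, zero_mul, ← sum_filter]
  congr 1
  ext k
  simp

lemma exists_cycSucc_eq_of_pos {n : ℕ} (m : Fin n) (hm : 0 < m.val) :
    ∃ i : Fin n, cycSucc i = m ∧ ∀ j : Fin n, j ≤ i ↔ j < m := by
  refine ⟨⟨m.val - 1, by omega⟩, ?_, fun j => ?_⟩
  · ext
    simp [cycSucc, Nat.sub_add_cancel hm, Nat.mod_eq_of_lt m.isLt]
  · simp only [Fin.le_def, Fin.lt_def]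
    omega

lemma Tmat_mul_sub_shiftRows_apply_le_neg_two {n : ℕ} {ι : Type*}
    (V W : Matrix (Fin n) ι ℝ) {i k : Fin n} {s : ι}
    (hV : ∀ j ≤ i, 0 ≤ V j s) (hW : ∀ j ≤ i, W j s ≤ 0)
    (hki : k ≤ i) (hVk : V k s = 1) (hVsucc : V (cycSucc i) s = 1) :
    (Tmat n * (W - V) - shiftRows V) i s ≤ -2 := by
  have hsum : ∑ j ∈ Iic i, (W - V) j s ≤ -1 :=
    calc ∑ j ∈ Iic i, (W - V) j s
        ≤ ∑ j ∈ Iic i, -V j s :=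
          sum_le_sum fun j hj => by
            rw [Matrix.sub_apply]
            linarith [hW j (mem_Iic.mp hj)]
      _ = -∑ j ∈ Iic i, V j s := sum_neg_distrib _
      _ ≤ -V k s :=
          neg_le_neg <| single_le_sum (fun j hj => hV j (mem_Iic.mp hj)) (mem_Iic.mpr hki)
      _ = -1 := by rw [hVk]
  rw [Matrix.sub_apply, Tmat_mul_apply, shiftRows, hVsucc]
  linarith

/-- Let `V`, `W` be `n × ℓ` (0,1)-matrices with every entry of `T (W - V) - V⁺` at least `-1`.
Setting `A_i = {s | V i s = 1}` and `B_i = {s | W i s = 1}`, for every `m` one has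
`⋃_{k < m} (A_k ∩ A_m) ⊆ ⋃_{i < m} B_i`. -/
theorem normality_inclusion {n ℓ : ℕ} (V W : Matrix (Fin n) (Fin ℓ) ℝ)
    (hV : ZeroOneMat V) (hW : ZeroOneMat W)
    (h : ∀ i j, (-1 : ℝ) ≤ (Tmat n * (W - V) - shiftRows V) i j)
    (m : Fin n) :
    (⋃ k ∈ {k : Fin n | k < m}, ({s : Fin ℓ | V k s = 1} ∩ {s : Fin ℓ | V m s = 1})) ⊆
      ⋃ i ∈ {i : Fin n | i < m}, {s : Fin ℓ | W i s = 1} := by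
  intro s hs
  simp only [Set.mem_iUnion, Set.mem_inter_iff, Set.mem_ofPred_eq, exists_prop] at hs ⊢
  obtain ⟨k, hkm, hVk, hVm⟩ := hs
  by_contra! hWne
  obtain ⟨i, hi, hle⟩ := exists_cycSucc_eq_of_pos m (Nat.zero_lt_of_lt hkm)
  have hV_nonneg : ∀ j ≤ i, 0 ≤ V j s := fun j _ => by rcases hV j s with h0 | h1 <;> simp [*]
  have hW_zero : ∀ j ≤ i, W j s ≤ 0 := fun j hj =>
    ((hW j s).resolve_right (hWne j ((hle j).mp hj))).le
  have hlow := Tmat_mul_sub_shiftRows_apply_le_neg_two V W hV_nonneg hW_zero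
    ((hle k).mpr hkm) hVk (hi ▸ hVm)
  linarith [h i s]

end PaperStmt
end

section
/- Tarski's alternative: For every discrete group G, exactly one of the following holds: (1) G admits a paradoxical decomposition; (2) G is amenable. -/
open Pointwise

namespace PaperStmt

/-- A group admits a paradoxical decomposition: there are pairwise disjoint subsets
`A 1, …, A p, B 1, …, B q` and group elements `s i`, `t j` such that the translates
`s i • A i` partition `G` and the translates `t j • B j` partition `G`. -/
def IsParadoxical (G : Type*) [Group G] : Prop :=
  ∃ (p q : ℕ), 0 < p ∧ 0 < q ∧
    ∃ (A : Fin p → Set G) (B : Fin q → Set G) (s : Fin p → G) (t : Fin q → G),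
      (∀ i i', i ≠ i' → Disjoint (A i) (A i')) ∧
      (∀ j j', j ≠ j' → Disjoint (B j) (B j')) ∧
      (∀ i j, Disjoint (A i) (B j)) ∧
      (⋃ i, s i • A i) = Set.univ ∧
      (∀ i i', i ≠ i' → Disjoint (s i • A i) (s i' • A i')) ∧
      (⋃ j, t j • B j) = Set.univ ∧
      (∀ j j', j ≠ j' → Disjoint (t j • B j) (t j' • B j'))

/-- A finitely additive, left-invariant probability measure defined on all subsets of `G`
(the defining property of amenability for a discrete group). -/
def HasLeftInvariantMean (G : Type*) [Group G] : Prop :=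
  ∃ μ : Set G → ℝ,
    (∀ A : Set G, 0 ≤ μ A ∧ μ A ≤ 1) ∧
    μ Set.univ = 1 ∧
    (∀ A B : Set G, Disjoint A B → μ (A ∪ B) = μ A + μ B) ∧
    (∀ (g : G) (A : Set G), μ (g • A) = μ A)

/-- A *complete* paradoxical decomposition with `p + q` pieces: the pieces
`A 1, …, A p, B 1, …, B q` form a partition of `G`, and the translates
`s i • A i` and `t j • B j` each form a partition of `G`. -/
def IsCompleteParadox (G : Type*) [Group G] (p q : ℕ) : Prop :=
  ∃ (A : Fin p → Set G) (B : Fin q → Set G) (s : Fin p → G) (t : Fin q → G),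
    (∀ i i', i ≠ i' → Disjoint (A i) (A i')) ∧
    (∀ j j', j ≠ j' → Disjoint (B j) (B j')) ∧
    (∀ i j, Disjoint (A i) (B j)) ∧
    ((⋃ i, A i) ∪ (⋃ j, B j)) = Set.univ ∧
    (⋃ i, s i • A i) = Set.univ ∧
    (∀ i i', i ≠ i' → Disjoint (s i • A i) (s i' • A i')) ∧
    (⋃ j, t j • B j) = Set.univ ∧
    (∀ j j', j ≠ j' → Disjoint (t j • B j) (t j' • B j'))

/-- The Tarski number of a group: the least total number of pieces `p + q` over all
complete paradoxical decompositions of `G`, and `∞` if there is none. -/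
noncomputable def tarskiNumber (G : Type*) [Group G] : ℕ∞ :=
  sInf {N : ℕ∞ | ∃ p q : ℕ, N = ((p + q : ℕ) : ℕ∞) ∧ IsCompleteParadox G p q}

end PaperStmt

/-!
A paradoxical decomposition rules out an invariant mean: the pieces `A i`, and likewise the
pieces `B j`, would have total mean `1`, while all of them together have mean at most `1`.

Conversely, suppose `G` is not paradoxical. If some finite `S` satisfied `2 * #F ≤ #(S * F)` for
every finite `F`, Hall's marriage theorem would give an injection `G × Fin 2 → G` moving each
point by an element of `S`, and sorting points by that element gives a paradoxical
decomposition. So for every finite `S ∋ 1` there is `F` with `#(S ^ N * F) < 2 * #F`; the chain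
`S ^ k * F` then cannot grow by a factor `1 + ε / 2` at each of the first `N` steps, and at a step
where it does not, `S ^ k * F` is a Følner set for `S`. Følner sets yield an invariant mean as
ultrafilter limits of densities (`IsFoelner.amenable`).
-/

open Function MeasureTheory Filter
open scoped Finset symmDiff ENNReal

theorem exists_lt_le_mul_of_lt_pow_mul {a : ℕ → ℝ} {r : ℝ} {N : ℕ} (hr : 0 ≤ r)
    (hN : a N < r ^ N * a 0) : ∃ k < N, a (k + 1) ≤ r * a k := by
  by_contra! hgrow
  have : ∀ k ≤ N, r ^ k * a 0 ≤ a k := by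
    intro k hk
    induction k with
    | zero => simp
    | succ k ih => calc
        r ^ (k + 1) * a 0 = r * (r ^ k * a 0) := by ring
        _ ≤ r * a k := mul_le_mul_of_nonneg_left (ih (by omega)) hr
        _ ≤ a (k + 1) := (hgrow k (by omega)).le
  exact (this N le_rfl).not_gt hN

theorem Finset.card_smul_symmDiff_le_two_mul_card_sdiff {G α : Type*} [Group G] [MulAction G α]
    [DecidableEq α] {g : G} {F E : Finset α} (hgE : g • F ⊆ E) : #((g • F) ∆ F) ≤ 2 * #(E \ F) := by
  have hsdiff : #(g • F \ F) ≤ #(E \ F) :=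
    Finset.card_le_card (Finset.sdiff_subset_sdiff hgE le_rfl)
  have hcomm : #(F \ g • F) = #(g • F \ F) :=
    Finset.card_sdiff_comm (Finset.card_smul_finset g F).symm
  calc #((g • F) ∆ F) ≤ #(g • F \ F) + #(F \ g • F) := by
        rw [symmDiff_def]; exact Finset.card_union_le _ _
    _ ≤ 2 * #(E \ F) := by omega

namespace PaperStmt

section FinitelyAdditive

variable {α : Type*} {μ : Set α → ℝ}

theorem apply_biUnion_finset_of_additive
    (hadd : ∀ A B : Set α, Disjoint A B → μ (A ∪ B) = μ A + μ B)
    {ι : Type*} (s : Finset ι) {A : ι → Set α}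
    (hA : Set.PairwiseDisjoint ↑s A) : μ (⋃ i ∈ s, A i) = ∑ i ∈ s, μ (A i) := by
  classical
  induction s using Finset.induction_on with
  | empty => simpa using hadd ∅ ∅ (disjoint_bot_left)
  | insert a s ha ih =>
    rw [Finset.coe_insert, Set.pairwiseDisjoint_insert_of_notMem (by exact_mod_cast ha)] at hA
    have hdisj : Disjoint (A a) (⋃ i ∈ s, A i) :=
      Set.disjoint_iUnion₂_right.2 fun j (hj : j ∈ s) => hA.2 j hj
    rw [Finset.set_biUnion_insert, hadd _ _ hdisj, Finset.sum_insert ha, ih hA.1]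

theorem apply_iUnion_of_additive
    (hadd : ∀ A B : Set α, Disjoint A B → μ (A ∪ B) = μ A + μ B)
    {ι : Type*} [Fintype ι] {A : ι → Set α}
    (hA : Pairwise (Disjoint on A)) : μ (⋃ i, A i) = ∑ i, μ (A i) := by
  simpa using apply_biUnion_finset_of_additive hadd Finset.univ (hA.set_pairwise _)

end FinitelyAdditive

section

variable {G : Type*} [Group G]

theorem apply_iUnion_eq_apply_iUnion_smul {μ : Set G → ℝ}
    (hadd : ∀ A B : Set G, Disjoint A B → μ (A ∪ B) = μ A + μ B)
    (hinv : ∀ (g : G) (A : Set G), μ (g • A) = μ A) {n : ℕ} {A : Fin n → Set G}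
    (s : Fin n → G)
    (hA : ∀ i i', i ≠ i' → Disjoint (A i) (A i'))
    (hsA : ∀ i i', i ≠ i' → Disjoint (s i • A i) (s i' • A i')) :
    μ (⋃ i, A i) = μ (⋃ i, s i • A i) := by
  simp only [apply_iUnion_of_additive hadd (fun i i' => hA i i'),
    apply_iUnion_of_additive hadd (fun i i' => hsA i i'), hinv]

theorem IsParadoxical.not_hasLeftInvariantMean (h : IsParadoxical G) :
    ¬ HasLeftInvariantMean G := by
  rintro ⟨μ, hμ, huniv, hadd, hinv⟩
  obtain ⟨p, q, -, -, A, B, s, t, hA, hB, hAB, hsA, hsA_disj, htB, htB_disj⟩ := h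
  have hAB' : Disjoint (⋃ i, A i) (⋃ j, B j) :=
    Set.disjoint_iUnion_left.2 fun i => Set.disjoint_iUnion_right.2 (hAB i)
  have htwo : μ ((⋃ i, A i) ∪ ⋃ j, B j) = 2 := by
    rw [hadd _ _ hAB', apply_iUnion_eq_apply_iUnion_smul hadd hinv s hA hsA_disj,
      apply_iUnion_eq_apply_iUnion_smul hadd hinv t hB htB_disj, hsA, htB, huniv]
    norm_num
  linarith [(hμ ((⋃ i, A i) ∪ ⋃ j, B j)).2]

theorem isParadoxical_of_injective {p : ℕ} (e : Fin p → G) {f : G × Fin 2 → G}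
    (hf : Injective f) (he : ∀ x, ∃ k, f x = e k * x.1) : IsParadoxical G := by
  choose c hc using he
  let P (i : Fin 2) (k : Fin p) : Set G := (fun g => f (g, i)) '' {g | c (g, i) = k}
  have hP_disj : ∀ i k i' k', (i, k) ≠ (i', k') → Disjoint (P i k) (P i' k') := by
    refine fun i k i' k' hne => Set.disjoint_left.2 ?_
    rintro _ ⟨g, rfl : c (g, i) = k, rfl⟩ ⟨g', rfl : c (g', i') = k', hgg'⟩
    obtain ⟨rfl, rfl⟩ := Prod.ext_iff.1 (hf hgg')
    exact hne rfl
  have hP_smul : ∀ i k, (e k)⁻¹ • P i k = {g | c (g, i) = k} := by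
    intro i k
    rw [← Set.image_smul, Set.image_image, Set.image_congr (g := id) fun g hg => ?_,
      Set.image_id]
    rw [id, smul_eq_mul, hc, ← hg.out, inv_mul_cancel_left]
  have hfiber_cover : ∀ i, ⋃ k, (e k)⁻¹ • P i k = Set.univ := fun i =>
    Set.eq_univ_of_forall fun g => Set.mem_iUnion.2 ⟨c (g, i), by simp [hP_smul]⟩
  have hfiber_disj :
      ∀ i k k', k ≠ k' → Disjoint ((e k)⁻¹ • P i k) ((e k')⁻¹ • P i k') := by
    intro i k k' hkk'
    simp only [hP_smul]
    exact Set.disjoint_left.2 fun g hk hk' => hkk' (hk.symm.trans hk')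
  refine ⟨p, p, Fin.pos (c (1, 0)), Fin.pos (c (1, 0)), P 0, P 1, fun k => (e k)⁻¹,
    fun k => (e k)⁻¹, fun k k' h => hP_disj _ _ _ _ (by simpa using h),
    fun k k' h => hP_disj _ _ _ _ (by simpa using h), fun k k' => hP_disj _ _ _ _ (by simp),
    hfiber_cover 0, hfiber_disj 0, hfiber_cover 1, hfiber_disj 1⟩

theorem isParadoxical_of_forall_two_mul_card_le [DecidableEq G] (S : Finset G)
    (hS : ∀ F : Finset G, 2 * #F ≤ #(S * F)) : IsParadoxical G := by
  obtain ⟨f, hf, hfS⟩ := (Finset.all_card_le_biUnion_card_iff_exists_injective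
    fun x : G × Fin 2 => S.image (· * x.1)).1 fun T => calc
      #T ≤ #(T.image Prod.fst ×ˢ (Finset.univ : Finset (Fin 2))) := Finset.card_le_card
        fun x hx => Finset.mem_product.2 ⟨Finset.mem_image_of_mem _ hx, Finset.mem_univ _⟩
      _ = 2 * #(T.image Prod.fst) := by simp [mul_comm]
      _ ≤ #(S * T.image Prod.fst) := hS _
      _ ≤ #(T.biUnion fun x => S.image (· * x.1)) := Finset.card_le_card fun y hy => by
        obtain ⟨s, hs, _, hg, rfl⟩ := Finset.mem_mul.1 hy
        obtain ⟨x, hx, rfl⟩ := Finset.mem_image.1 hg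
        exact Finset.mem_biUnion.2 ⟨x, hx, Finset.mem_image_of_mem _ hs⟩
  refine isParadoxical_of_injective (fun k => (S.equivFin.symm k : G)) hf fun x => ?_
  obtain ⟨s, hs, hfx⟩ := Finset.mem_image.1 (hfS x)
  exact ⟨S.equivFin ⟨s, hs⟩, by simp [hfx]⟩

theorem exists_card_smul_symmDiff_le [DecidableEq G]
    (hno_doubling : ∀ S : Finset G, ∃ F : Finset G, #(S * F) < 2 * #F)
    (K : Finset G) {ε : ℝ} (hε : 0 < ε) :
    ∃ F : Finset G, F.Nonempty ∧ ∀ g ∈ K, (#((g • F) ∆ F) : ℝ) ≤ ε * #F := by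
  obtain ⟨S, hS_one, hKS⟩ : ∃ S : Finset G, (1 : G) ∈ S ∧ K ⊆ S :=
    ⟨insert 1 K, Finset.mem_insert_self 1 K, Finset.subset_insert 1 K⟩
  obtain ⟨N, hN⟩ := pow_unbounded_of_one_lt 2 (by linarith : 1 < 1 + ε / 2)
  obtain ⟨F, hF⟩ := hno_doubling (S ^ N)
  have hF_pos : (0 : ℝ) < #F := by norm_cast; omega
  obtain ⟨k, -, hk⟩ := exists_lt_le_mul_of_lt_pow_mul (a := fun k => (#(S ^ k * F) : ℝ))
    (by positivity : 0 ≤ 1 + ε / 2) (N := N) (by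
      rw [pow_zero, one_mul]
      calc (#(S ^ N * F) : ℝ) < 2 * #F := by exact_mod_cast hF
        _ < (1 + ε / 2) ^ N * #F := by gcongr)
  rw [pow_succ', mul_assoc] at hk
  set E := S ^ k * F
  have hE_sub : E ⊆ S * E := fun x hx => by simpa using Finset.mul_mem_mul hS_one hx
  have hcard : (#((S * E) \ E) : ℝ) = #(S * E) - #E := by
    rw [Finset.card_sdiff_of_subset hE_sub, Nat.cast_sub (Finset.card_le_card hE_sub)]
  refine ⟨E, ?_, fun g hg => ?_⟩
  · exact Finset.Nonempty.mul ⟨1, Finset.one_mem_pow hS_one⟩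
      (Finset.card_pos.1 (by exact_mod_cast hF_pos))
  · have := Finset.card_smul_symmDiff_le_two_mul_card_sdiff (F := E)
      (Finset.smul_finset_subset_mul (hKS hg))
    calc (#((g • E) ∆ E) : ℝ) ≤ 2 * #((S * E) \ E) := by exact_mod_cast this
      _ ≤ ε * #E := by rw [hcard]; linarith

theorem exists_isFoelner_count [MeasurableSpace G] [MeasurableSingletonClass G] [DecidableEq G]
    (hfoelner : ∀ (K : Finset G) {ε : ℝ}, 0 < ε →
      ∃ F : Finset G, F.Nonempty ∧ ∀ g ∈ K, (#((g • F) ∆ F) : ℝ) ≤ ε * #F) :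
    ∃ F : Finset G × ℕ → Finset G,
      IsFoelner G Measure.count atTop fun d => (F d : Set G) := by
  choose F hF_ne hF using fun d : Finset G × ℕ => hfoelner d.1 (Nat.one_div_pos_of_nat (n := d.2))
  refine ⟨F, .of_forall fun d => (F d).measurableSet, .of_forall fun d => ?_,
    .of_forall fun d => by simp, fun g => ?_⟩
  · simpa using (hF_ne d).ne_empty
  · have hratio : ∀ d,
        Measure.count ((g • (F d : Set G)) ∆ F d) / Measure.count (F d : Set G)
          = ENNReal.ofReal ((#((g • F d) ∆ F d) : ℝ) / #(F d)) := fun d => by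
      rw [← Finset.coe_smul_finset, ← Finset.coe_symmDiff, Measure.count_apply_finset,
        Measure.count_apply_finset, ENNReal.ofReal_div_of_pos (by simpa using hF_ne d)]
      simp
    simp_rw [hratio, ← ENNReal.ofReal_zero]
    refine ENNReal.tendsto_ofReal (tendsto_of_tendsto_of_tendsto_of_le_of_le'
      tendsto_const_nhds (tendsto_one_div_add_atTop_nhds_zero_nat.comp
        (tendsto_snd.mono_left prod_atTop_atTop_eq.ge))
      (.of_forall fun d => by positivity) ?_)
    filter_upwards [eventually_ge_atTop ({g}, 0)] with d hd
    rw [div_le_iff₀ (by simpa using hF_ne d)]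
    exact hF d g (hd.1 (Finset.mem_singleton_self g))

theorem hasLeftInvariantMean_of_ennreal {m : Set G → ℝ≥0∞} (hm_univ : m Set.univ = 1)
    (hm_add : ∀ A B, Disjoint A B → m (A ∪ B) = m A + m B)
    (hm_smul : ∀ (g : G) A, m (g • A) = m A) :
    HasLeftInvariantMean G := by
  have hm_le : ∀ A, m A ≤ 1 := fun A => by
    calc m A ≤ m A + m Aᶜ := le_self_add
      _ = 1 := by rw [← hm_add A Aᶜ disjoint_compl_right, Set.union_compl_self, hm_univ]
  have hm_ne_top : ∀ A, m A ≠ ∞ := fun A => ne_top_of_le_ne_top ENNReal.one_ne_top (hm_le A)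
  refine ⟨fun A => (m A).toReal, fun A => ⟨ENNReal.toReal_nonneg, ?_⟩, by simp [hm_univ],
    fun A B hAB => ?_, fun g A => by simp [hm_smul]⟩
  · simpa using ENNReal.toReal_mono ENNReal.one_ne_top (hm_le A)
  · dsimp only
    rw [hm_add A B hAB, ENNReal.toReal_add (hm_ne_top A) (hm_ne_top B)]

theorem hasLeftInvariantMean_of_isFoelner [MeasurableSpace G] [DiscreteMeasurableSpace G]
    {μ : Measure G} [SMulInvariantMeasure G G μ] {ι : Type*} {l : Filter ι} [l.NeBot]
    {F : ι → Set G} (hF : IsFoelner G μ l F) : HasLeftInvariantMean G :=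
  let ⟨_, hm_univ, hm_add, hm_smul⟩ := hF.amenable
  hasLeftInvariantMean_of_ennreal hm_univ (fun A B => hm_add A B .of_discrete) hm_smul

theorem hasLeftInvariantMean_of_not_isParadoxical (h : ¬ IsParadoxical G) :
    HasLeftInvariantMean G := by
  classical
  let _ : MeasurableSpace G := ⊤
  have hno_doubling : ∀ S : Finset G, ∃ F : Finset G, #(S * F) < 2 * #F := fun S => by
    by_contra! hS
    exact h (isParadoxical_of_forall_two_mul_card_le S hS)
  obtain ⟨F, hF⟩ := exists_isFoelner_count (exists_card_smul_symmDiff_le hno_doubling)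
  exact hasLeftInvariantMean_of_isFoelner hF

end

/-- **Tarski's alternative.** For every discrete group `G`, exactly one of the following holds:
(1) `G` admits a paradoxical decomposition; (2) `G` is amenable. -/
theorem tarski_alternative (G : Type*) [Group G] :
    Xor' (IsParadoxical G) (HasLeftInvariantMean G) := by
  by_cases h : IsParadoxical G
  · exact Or.inl ⟨h, h.not_hasLeftInvariantMean⟩
  · exact Or.inr ⟨hasLeftInvariantMean_of_not_isParadoxical h, h⟩

end PaperStmt
end
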